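/- arXiv:1612.08082 — 3 statements merged into one kernel-verified Lean document; each statement's English description precedes it below -/
import Mathlib

section
/- Let p̂₀ be any estimated propensity function with p̂₀(a|x) > 0 for all (a,x), and let m > 0 be a truncation level. Define the truncated importance-sampling estimator R̂_m(a; P̂₀) = (1/n) Σ_{j=1}^n min(𝕀(A_j = a)/p̂₀(A_j|X_j), m) R_j^obs from n i.i.d. copies (X_j, A_j, R_j^obs) of (X, A, R^obs), and its bias bias(R̂_m(a; P̂₀)) = r̄(a) − E[R̂_m(a; P̂₀)]. Then under common support and unconfoundedness, bias(R̂_m(a; P̂₀)) = E[ r̄(a, X) ( (1 − p₀(a|X)/p̂₀(a|X)) 𝕀(p̂₀(a|X) > m⁻¹) + (1 − m·p₀(a|X)) 𝕀(p̂₀(a|X) ≤ m⁻¹) ) ]. -/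
/-!
Averaging identically distributed summands, the estimator has the mean of a single summand,
`min(𝕀(A = a)/p̂₀(A|X), m) R(A) = min(1/p̂₀(a|X), m) 𝕀(A = a) R(a)`. On each of the finitely many
fibres `{X = x}`, unconfoundedness makes the law of the reward vector on `{A = a, X = x}` equal to
`p₀(a|x)` times its law on `{X = x}`, so this mean is `E[min(1/p̂₀(a|X), m) p₀(a|X) r̄(a,X)]`.
The bias is therefore `E[r̄(a,X) (1 - min(1/p̂₀(a|X), m) p₀(a|X))]`, and splitting the minimum
according to whether `p̂₀(a|X) > 1/m` gives the stated weight.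
-/

open MeasureTheory ProbabilityTheory

/-- Conditional average `E[f | E] = (∫_E f dμ) / μ(E)` (with the convention `0/0 = 0`). -/
noncomputable def condAvg {Ω : Type*} [MeasurableSpace Ω] (μ : Measure Ω)
    (E : Set Ω) (f : Ω → ℝ) : ℝ :=
  (∫ ω in E, f ω ∂μ) / (μ E).toReal

lemma comp_mul_eq_sum_indicator {Ω S : Type*} [Fintype S] (X : Ω → S) (φ : S → ℝ) (g : Ω → ℝ)
    (ω : Ω) : φ (X ω) * g ω = ∑ x, φ x * (X ⁻¹' {x}).indicator g ω := by
  classical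
  simp [Set.indicator_apply, mul_ite, eq_comm]

section

variable {Ω : Type*} [MeasurableSpace Ω] {μ : Measure Ω}

lemma condAvg_mul_measureReal [IsFiniteMeasure μ] (E : Set Ω) (f : Ω → ℝ) :
    condAvg μ E f * μ.real E = ∫ ω in E, f ω ∂μ := by
  by_cases hE : μ E = 0
  · simp [Measure.restrict_eq_zero.mpr hE, measureReal_def, hE]
  · exact div_mul_cancel₀ _ (ENNReal.toReal_ne_zero.mpr ⟨hE, measure_ne_top μ E⟩)

lemma integral_sum_div_eq_of_identDistrib {β : Type*} [MeasurableSpace β] {n : ℕ} (hn : 0 < n)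
    {Z : Fin n → Ω → β} {Z₀ : Ω → β} (hZ : ∀ j, IdentDistrib (Z j) Z₀ μ μ)
    {f : β → ℝ} (hf : Measurable f) (hint : Integrable (fun ω => f (Z₀ ω)) μ) :
    ∫ ω, (∑ j, f (Z j ω)) / n ∂μ = ∫ ω, f (Z₀ ω) ∂μ := by
  have hcopy (j : Fin n) : IdentDistrib (fun ω => f (Z j ω)) (fun ω => f (Z₀ ω)) μ μ :=
    (hZ j).comp hf
  rw [integral_div, integral_finsetSum _ fun j _ => (hcopy j).integrable_iff.mpr hint]
  simp only [fun j => (hcopy j).integral_eq, Finset.sum_const, Finset.card_univ,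
    Fintype.card_fin, nsmul_eq_mul]
  exact mul_div_cancel_left₀ _ (Nat.cast_ne_zero.mpr hn.ne')

lemma map_restrict_eq_smul_of_condIndep [IsFiniteMeasure μ] {β : Type*} [MeasurableSpace β]
    {T : Ω → β} (hT : Measurable T) {B E : Set Ω} (hBE : B ⊆ E) {c : ENNReal}
    (hB : μ B = c * μ E)
    (hindep : ∀ C, MeasurableSet C → μ (T ⁻¹' C ∩ B) * μ E = μ (T ⁻¹' C ∩ E) * μ B) :
    (μ.restrict B).map T = c • (μ.restrict E).map T := by
  ext C hC
  rw [Measure.smul_apply, Measure.map_apply hT hC, Measure.map_apply hT hC,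
    Measure.restrict_apply (hT hC), Measure.restrict_apply (hT hC), smul_eq_mul]
  by_cases hE : μ E = 0
  · simp [measure_mono_null (Set.inter_subset_right.trans hBE) hE,
      measure_mono_null Set.inter_subset_right hE]
  · rw [← ENNReal.mul_left_inj hE (measure_ne_top μ E), hindep C hC, hB]
    ring

lemma setIntegral_comp_eq_mul_of_condIndep [IsFiniteMeasure μ] {β : Type*} [MeasurableSpace β]
    {T : Ω → β} (hT : Measurable T) {B E : Set Ω} (hBE : B ⊆ E) {p : ℝ} (hp : 0 ≤ p)
    (hB : μ B = ENNReal.ofReal p * μ E)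
    (hindep : ∀ C, MeasurableSet C → μ (T ⁻¹' C ∩ B) * μ E = μ (T ⁻¹' C ∩ E) * μ B)
    {f : β → ℝ} (hf : Measurable f) :
    ∫ ω in B, f (T ω) ∂μ = p * ∫ ω in E, f (T ω) ∂μ := by
  rw [← integral_map hT.aemeasurable hf.aestronglyMeasurable,
    map_restrict_eq_smul_of_condIndep hT hBE hB hindep, integral_smul_measure,
    integral_map hT.aemeasurable hf.aestronglyMeasurable, ENNReal.toReal_ofReal hp, smul_eq_mul]

section Fibers

variable {S : Type*} [MeasurableSpace S] [Fintype S] [MeasurableSingletonClass S] {X : Ω → S}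

lemma integrable_comp_mul (hX : Measurable X) {g : Ω → ℝ} (hg : Integrable g μ) (φ : S → ℝ) :
    Integrable (fun ω => φ (X ω) * g ω) μ := by
  simp only [comp_mul_eq_sum_indicator X φ g]
  exact integrable_finsetSum _ fun x _ =>
    (hg.indicator (hX (measurableSet_singleton x))).const_mul (φ x)

lemma integral_comp_mul_eq_sum (hX : Measurable X) {g : Ω → ℝ} (hg : Integrable g μ)
    (φ : S → ℝ) : ∫ ω, φ (X ω) * g ω ∂μ = ∑ x, φ x * ∫ ω in X ⁻¹' {x}, g ω ∂μ := by
  simp only [comp_mul_eq_sum_indicator X φ g]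
  rw [integral_finsetSum _ fun x _ =>
    (hg.indicator (hX (measurableSet_singleton x))).const_mul (φ x)]
  simp only [integral_const_mul, integral_indicator (hX (measurableSet_singleton _))]

lemma integrable_comp_of_finite [IsFiniteMeasure μ] (hX : Measurable X) (φ : S → ℝ) :
    Integrable (fun ω => φ (X ω)) μ :=
  Integrable.of_finite.comp_measurable hX

lemma integral_comp_eq_sum [IsFiniteMeasure μ] (hX : Measurable X) (φ : S → ℝ) :
    ∫ ω, φ (X ω) ∂μ = ∑ x, φ x * μ.real (X ⁻¹' {x}) := by
  simpa using integral_comp_mul_eq_sum hX (integrable_const (1 : ℝ)) φ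

theorem integral_comp_mul_indicator_eq_of_unconfounded [IsFiniteMeasure μ]
    {ι : Type*} [MeasurableSpace ι] [MeasurableSingletonClass ι] {A : Ω → ι} {R : ι → Ω → ℝ}
    (hX : Measurable X) (hA : Measurable A) (hR : ∀ b, Measurable (R b)) {a : ι} (hRa : Integrable (R a) μ) {p : S → ℝ}
    (hp : ∀ x, 0 ≤ p x)
    (hpolicy : ∀ x, μ {ω | A ω = a ∧ X ω = x} = ENNReal.ofReal (p x) * μ {ω | X ω = x})
    (hunconf : ∀ x (C : Set (ι → ℝ)), MeasurableSet C →
      μ {ω | (fun b => R b ω) ∈ C ∧ A ω = a ∧ X ω = x} * μ {ω | X ω = x} =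
        μ {ω | (fun b => R b ω) ∈ C ∧ X ω = x} * μ {ω | A ω = a ∧ X ω = x})
    (φ : S → ℝ) :
    ∫ ω, φ (X ω) * (A ⁻¹' {a}).indicator (R a) ω ∂μ =
      ∫ ω, φ (X ω) * p (X ω) * condAvg μ {ω' | X ω' = X ω} (R a) ∂μ := by
  rw [integral_comp_mul_eq_sum hX (hRa.indicator (hA (measurableSet_singleton a))),
    integral_comp_eq_sum hX fun x => φ x * p x * condAvg μ {ω' | X ω' = x} (R a)]
  refine Finset.sum_congr rfl fun x _ => ?_
  have hfiber : ∫ ω in {ω | A ω = a ∧ X ω = x}, R a ω ∂μ =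
      p x * ∫ ω in {ω | X ω = x}, R a ω ∂μ :=
    -- `T ⁻¹' C ∩ B` unfolds to `{ω | T ω ∈ C ∧ ω ∈ B}`, the shape of `hunconf`
    setIntegral_comp_eq_mul_of_condIndep (measurable_pi_lambda _ hR) (fun _ h => h.2) (hp x)
      (hpolicy x) (hunconf x) (measurable_pi_apply a)
  rw [setIntegral_indicator (hA (measurableSet_singleton a)), Set.inter_comm]
  change φ x * ∫ ω in {ω | A ω = a ∧ X ω = x}, R a ω ∂μ = _
  rw [hfiber, ← condAvg_mul_measureReal, ← mul_assoc, ← mul_assoc]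
  rfl

end Fibers

end

lemma min_ite_div_mul_eq_mul_indicator {Ω ι : Type*} [DecidableEq ι] (A : Ω → ι)
    (R : ι → Ω → ℝ) (q : ι → ℝ) (a : ι) {m : ℝ} (hm : 0 ≤ m) (ω : Ω) :
    min ((if A ω = a then 1 else 0) / q (A ω)) m * R (A ω) ω =
      min (q a)⁻¹ m * (A ⁻¹' {a}).indicator (R a) ω := by
  by_cases h : A ω = a
  · simp [h]
  · simp [h, hm]

lemma one_sub_min_inv_mul_eq {p q m : ℝ} (hq : 0 < q) (hm : 0 < m) :
    1 - min q⁻¹ m * p =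
      (1 - p / q) * (if m⁻¹ < q then 1 else 0) + (1 - m * p) * (if q ≤ m⁻¹ then 1 else 0) := by
  by_cases h : m⁻¹ < q
  · rw [min_eq_left ((inv_lt_comm₀ hq hm).2 h).le, if_pos h, if_neg (not_le.2 h)]
    ring
  · rw [min_eq_right ((le_inv_comm₀ hm hq).2 (not_lt.1 h)), if_neg h, if_pos (not_lt.1 h)]
    ring

theorem truncated_ips_bias_general
    {Ω : Type*} [MeasurableSpace Ω] (μ : Measure Ω) [IsProbabilityMeasure μ]
    (d k : ℕ) (𝒳i : Fin d → Type*)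
    [∀ i, Fintype (𝒳i i)] [∀ i, MeasurableSpace (𝒳i i)]
    [∀ i, MeasurableSingletonClass (𝒳i i)]
    (X : Ω → ∀ i, 𝒳i i) (A : Ω → Fin k) (R : Fin k → Ω → ℝ)
    (hX : Measurable X) (hA : Measurable A) (hR : ∀ a, Measurable (R a))
    (hRbdd : ∀ a ω, R a ω ∈ Set.Icc (0 : ℝ) 1)
    (p₀ : Fin k → (∀ i, 𝒳i i) → ℝ)
    -- common support
    (hp₀ : ∀ a x, 0 < p₀ a x)
    -- conditional on X, the action A is drawn from the logging policy p₀(⬝ | X)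
    (hpolicy : ∀ a x,
      μ {ω | A ω = a ∧ X ω = x} = ENNReal.ofReal (p₀ a x) * μ {ω | X ω = x})
    -- unconfoundedness: conditional on X, the potential rewards are independent of A
    (hunconf : ∀ (a : Fin k) (x : ∀ i, 𝒳i i) (Bset : Set (Fin k → ℝ)),
      MeasurableSet Bset →
      μ {ω | (fun b => R b ω) ∈ Bset ∧ A ω = a ∧ X ω = x} * μ {ω | X ω = x} =
        μ {ω | (fun b => R b ω) ∈ Bset ∧ X ω = x} * μ {ω | A ω = a ∧ X ω = x})
    -- estimated propensities and truncation level
    (phat₀ : Fin k → (∀ i, 𝒳i i) → ℝ) (hphat₀ : ∀ a x, 0 < phat₀ a x)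
    (m : ℝ) (hm : 0 < m)
    -- the data: n i.i.d. copies of (X, A, R^obs)
    (n : ℕ) (hn : 0 < n)
    (Xj : Fin n → Ω → ∀ i, 𝒳i i) (Aj : Fin n → Ω → Fin k) (Rj : Fin n → Ω → ℝ)
    (hident : ∀ j, IdentDistrib (fun ω => (Xj j ω, Aj j ω, Rj j ω))
      (fun ω => (X ω, A ω, R (A ω) ω)) μ μ)
    (a : Fin k) :
    (∫ ω, condAvg μ {ω' | X ω' = X ω} (R a) ∂μ) -
        ∫ ω, (∑ j, min ((if Aj j ω = a then (1 : ℝ) else 0) / phat₀ (Aj j ω) (Xj j ω)) m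
          * Rj j ω) / n ∂μ =
      ∫ ω, condAvg μ {ω' | X ω' = X ω} (R a) *
        ((1 - p₀ a (X ω) / phat₀ a (X ω)) * (if m⁻¹ < phat₀ a (X ω) then (1 : ℝ) else 0)
          + (1 - m * p₀ a (X ω)) * (if phat₀ a (X ω) ≤ m⁻¹ then (1 : ℝ) else 0)) ∂μ := by
  have hRa : Integrable (R a) μ := .of_bound (hR a).aestronglyMeasurable 1 <| ae_of_all _
    fun ω => by rw [Real.norm_of_nonneg (hRbdd a ω).1]; exact (hRbdd a ω).2
  have hsummand : Measurable fun z : (∀ i, 𝒳i i) × Fin k × ℝ =>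
      min ((if z.2.1 = a then (1 : ℝ) else 0) / phat₀ z.2.1 z.1) m * z.2.2 :=
    ((measurable_of_countable fun q : (∀ i, 𝒳i i) × Fin k =>
      min ((if q.2 = a then (1 : ℝ) else 0) / phat₀ q.2 q.1) m).comp
        (measurable_fst.prodMk measurable_snd.fst)).mul measurable_snd.snd
  have hweighted : (fun ω => min ((if A ω = a then (1 : ℝ) else 0) / phat₀ (A ω) (X ω)) m
      * R (A ω) ω) = fun ω => min (phat₀ a (X ω))⁻¹ m * (A ⁻¹' {a}).indicator (R a) ω :=
    funext fun ω => min_ite_div_mul_eq_mul_indicator A R (phat₀ · (X ω)) a hm.le ω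
  have hmean := integral_sum_div_eq_of_identDistrib hn hident hsummand <| hweighted ▸
    integrable_comp_mul hX (hRa.indicator (hA (measurableSet_singleton a)))
      fun x => min (phat₀ a x)⁻¹ m
  have hipw := integral_comp_mul_indicator_eq_of_unconfounded hX hA hR hRa (fun x => (hp₀ a x).le)
    (hpolicy a) (hunconf a) fun x => min (phat₀ a x)⁻¹ m
  rw [hmean, hweighted, hipw, ← integral_sub
    (integrable_comp_of_finite hX fun x => condAvg μ {ω' | X ω' = x} (R a))
    (integrable_comp_of_finite hX fun x => min (phat₀ a x)⁻¹ m * p₀ a x *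
      condAvg μ {ω' | X ω' = x} (R a))]
  congr 1 with ω
  rw [← one_sub_min_inv_mul_eq (hphat₀ a (X ω)) hm]
  ring

/-- Lemma 3 of the paper: the exact bias of the truncated
inverse-propensity-score estimator
`R̂_m(a; P̂₀) = (1/n) Σ_j min(𝕀(A_j = a)/phat₀(A_j|X_j), m) R_j^obs`
built from `n` i.i.d. copies of `(X, A, R^obs)`, when estimated propensities `phat₀`
are used in place of the true propensities `p₀`:
`bias(R̂_m(a; P̂₀)) = E[ r̄(a,X) ( (1 - p₀(a|X)/phat₀(a|X)) 𝕀(phat₀(a|X) > m⁻¹)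
                                + (1 - m p₀(a|X)) 𝕀(phat₀(a|X) ≤ m⁻¹) ) ]`. -/
theorem truncated_ips_bias
    {Ω : Type*} [MeasurableSpace Ω] (μ : Measure Ω) [IsProbabilityMeasure μ]
    (d k : ℕ) (𝒳i : Fin d → Type*)
    [∀ i, Fintype (𝒳i i)] [∀ i, MeasurableSpace (𝒳i i)]
    [∀ i, MeasurableSingletonClass (𝒳i i)]
    (X : Ω → ∀ i, 𝒳i i) (A : Ω → Fin k) (R : Fin k → Ω → ℝ)
    (hX : Measurable X) (hA : Measurable A) (hR : ∀ a, Measurable (R a))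
    (hRbdd : ∀ a ω, R a ω ∈ Set.Icc (0 : ℝ) 1)
    (p₀ : Fin k → (∀ i, 𝒳i i) → ℝ)
    -- common support
    (hp₀ : ∀ a x, 0 < p₀ a x)
    -- conditional on X, the action A is drawn from the logging policy p₀(⬝ | X)
    (hpolicy : ∀ a x,
      μ {ω | A ω = a ∧ X ω = x} = ENNReal.ofReal (p₀ a x) * μ {ω | X ω = x})
    -- unconfoundedness: conditional on X, the potential rewards are independent of A
    (hunconf : ∀ (a : Fin k) (x : ∀ i, 𝒳i i) (Bset : Set (Fin k → ℝ)),
      MeasurableSet Bset →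
      μ {ω | (fun b => R b ω) ∈ Bset ∧ A ω = a ∧ X ω = x} * μ {ω | X ω = x} =
        μ {ω | (fun b => R b ω) ∈ Bset ∧ X ω = x} * μ {ω | A ω = a ∧ X ω = x})
    -- estimated propensities and truncation level
    (phat₀ : Fin k → (∀ i, 𝒳i i) → ℝ) (hphat₀ : ∀ a x, 0 < phat₀ a x)
    (m : ℝ) (hm : 0 < m)
    -- the data: n i.i.d. copies of (X, A, R^obs)
    (n : ℕ) (hn : 0 < n)
    (Xj : Fin n → Ω → ∀ i, 𝒳i i) (Aj : Fin n → Ω → Fin k) (Rj : Fin n → Ω → ℝ)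
    (hident : ∀ j, IdentDistrib (fun ω => (Xj j ω, Aj j ω, Rj j ω))
      (fun ω => (X ω, A ω, R (A ω) ω)) μ μ)
    (hindep : iIndepFun
      (fun j ω => (Xj j ω, Aj j ω, Rj j ω)) μ)
    (a : Fin k) :
    (∫ ω, condAvg μ {ω' | X ω' = X ω} (R a) ∂μ) -
        ∫ ω, (∑ j, min ((if Aj j ω = a then (1 : ℝ) else 0) / phat₀ (Aj j ω) (Xj j ω)) m
          * Rj j ω) / n ∂μ =
      ∫ ω, condAvg μ {ω' | X ω' = X ω} (R a) *
        ((1 - p₀ a (X ω) / phat₀ a (X ω)) * (if m⁻¹ < phat₀ a (X ω) then (1 : ℝ) else 0)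
          + (1 - m * p₀ a (X ω)) * (if phat₀ a (X ω) ≤ m⁻¹ then (1 : ℝ) else 0)) ∂μ :=
  truncated_ips_bias_general μ d k 𝒳i X A R hX hA hR hRbdd p₀ hp₀ hpolicy hunconf phat₀ hphat₀ m hm
    n hn Xj Aj Rj hident a
end

section
/- Let p̂₀ be any estimated propensity function with p̂₀(a|x) > 0 for all (a,x), let m > 0, let i ∈ {1,…,d} be a feature type, and let x_i ∈ 𝒳_i with Pr(X_i = x_i) > 0. Then under common support and unconfoundedness, r̄(a, x_i) − E[ min(𝕀(A = a)/p̂₀(A|X), m) R^obs | X_i = x_i ] = E[ r̄(a, X) ( (1 − p₀(a|X)/p̂₀(a|X)) 𝕀(p̂₀(a|X) > m⁻¹) + (1 − m·p₀(a|X)) 𝕀(p̂₀(a|X) ≤ m⁻¹) ) | X_i = x_i ]. -/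
open MeasureTheory ProbabilityTheory

/-!
Split the event `{X_i = x_i}` into the fibers `{X = x}` of the finite-valued feature vector and
compare the three integrals fiber by fiber. On `{X = x}` the truncated IPS term is
`min(p̂₀(a|x)⁻¹, m) R(a) 𝕀(A = a)`, and the logging policy and unconfoundedness say that, restricted
to `{A = a, X = x}`, the law of the reward vector is `p₀(a|x)` times its law on `{X = x}`; so the
IPS term integrates to `min(p̂₀(a|x)⁻¹, m) p₀(a|x) ∫_{X = x} R(a)`. Since `r̄(a, X)` is constant on
the fiber it integrates to `∫_{X = x} R(a)` as well, and the bias factor is exactly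
`1 - min(p̂₀(a|x)⁻¹, m) p₀(a|x)`.
-/

open Set

section Generic

variable {Ω α β : Type*} [MeasurableSpace Ω] {μ : Measure Ω} [MeasurableSpace α]

lemma condAvg_sub_condAvg_of_setIntegral {E : Set Ω} {f g h : Ω → ℝ}
    (hfg : ∫ ω in E, f ω ∂μ - ∫ ω in E, g ω ∂μ = ∫ ω in E, h ω ∂μ) :
    condAvg μ E f - condAvg μ E g = condAvg μ E h := by
  rw [condAvg, condAvg, condAvg, div_sub_div_same, hfg]

lemma setIntegral_preimage_finset_eq_sum [MeasurableSingletonClass α] {X : Ω → α}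
    (hX : Measurable X) (s : Finset α) {f : Ω → ℝ}
    (hf : ∀ x ∈ s, IntegrableOn f (X ⁻¹' {x}) μ) :
    ∫ ω in X ⁻¹' s, f ω ∂μ = ∑ x ∈ s, ∫ ω in X ⁻¹' {x}, f ω ∂μ := by
  rw [← integral_biUnion_finset s (fun x _ => hX (measurableSet_singleton x))
    (fun x _ y _ hxy => pairwise_disjoint_fiber X hxy) hf]
  simp

lemma setIntegral_fiber_mul_comp [MeasurableSingletonClass α] {X : Ω → α}
    (hX : Measurable X) (f : Ω → ℝ) (φ : α → ℝ) (x : α) :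
    ∫ ω in X ⁻¹' {x}, f ω * φ (X ω) ∂μ = (∫ ω in X ⁻¹' {x}, f ω ∂μ) * φ x := by
  rw [← integral_mul_const]
  exact setIntegral_congr_fun (hX (measurableSet_singleton x)) fun ω hω => by
    rw [mem_singleton_iff.mp hω]

lemma integrableOn_fiber_comp [IsFiniteMeasure μ] [MeasurableSingletonClass α] {X : Ω → α}
    (hX : Measurable X) (φ : α → ℝ) (x : α) :
    IntegrableOn (fun ω => φ (X ω)) (X ⁻¹' {x}) μ :=
  (integrableOn_const (C := φ x) (measure_ne_top μ _)).congr_fun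
    (fun ω hω => by rw [mem_singleton_iff.mp hω]) (hX (measurableSet_singleton x))

lemma setIntegral_fiber_condAvg [IsFiniteMeasure μ] [MeasurableSingletonClass α] {X : Ω → α}
    (hX : Measurable X) (f : Ω → ℝ) (x : α) :
    ∫ ω in X ⁻¹' {x}, condAvg μ {ω' | X ω' = X ω} f ∂μ = ∫ ω in X ⁻¹' {x}, f ω ∂μ := by
  have hconst : EqOn (fun ω => condAvg μ {ω' | X ω' = X ω} f)
      (fun _ => condAvg μ (X ⁻¹' {x}) f) (X ⁻¹' {x}) := fun ω hω => by
    simp only [mem_singleton_iff.mp hω]; rfl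
  rw [setIntegral_congr_fun (hX (measurableSet_singleton x)) hconst, setIntegral_const,
    smul_eq_mul, condAvg, measureReal_def]
  by_cases hnull : μ (X ⁻¹' {x}) = 0
  · rw [Measure.restrict_eq_zero.mpr hnull, integral_zero_measure, zero_div, mul_zero]
  · exact mul_div_cancel₀ _ (ENNReal.toReal_ne_zero.mpr ⟨hnull, measure_ne_top μ _⟩)

lemma setIntegral_comp_eq_mul_of_measure_inter [MeasurableSpace β] {V : Ω → β}
    (hV : Measurable V) {S T : Set Ω} {c : ℝ} (hc : 0 ≤ c)
    (h : ∀ B, MeasurableSet B → μ (V ⁻¹' B ∩ S) = ENNReal.ofReal c * μ (V ⁻¹' B ∩ T))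
    {g : β → ℝ} (hg : StronglyMeasurable g) :
    ∫ ω in S, g (V ω) ∂μ = c * ∫ ω in T, g (V ω) ∂μ := by
  have hmap : (μ.restrict S).map V = ENNReal.ofReal c • (μ.restrict T).map V := by
    ext B hB
    simp only [Measure.map_apply hV hB, Measure.restrict_apply (hV hB), Measure.smul_apply,
      smul_eq_mul, h B hB]
  rw [← integral_map hV.aemeasurable hg.aestronglyMeasurable, hmap, integral_smul_measure,
    integral_map hV.aemeasurable hg.aestronglyMeasurable, ENNReal.toReal_ofReal hc, smul_eq_mul]

end Generic

/-- In the paper's notation the arguments are `m`, `q = p̂₀(a|x)` and `p = p₀(a|x)`. -/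
noncomputable def truncatedIpsBiasFactor (m q p : ℝ) : ℝ :=
  (1 - p / q) * (if m⁻¹ < q then 1 else 0) + (1 - m * p) * (if q ≤ m⁻¹ then 1 else 0)

lemma truncatedIpsBiasFactor_eq {m q : ℝ} (hm : 0 < m) (hq : 0 < q) (p : ℝ) :
    truncatedIpsBiasFactor m q p = 1 - min q⁻¹ m * p := by
  rw [truncatedIpsBiasFactor]
  by_cases hqm : q ≤ m⁻¹
  · rw [if_neg hqm.not_gt, if_pos hqm, min_eq_right ((le_inv_comm₀ hq hm).mp hqm)]
    ring
  · have hmq : m⁻¹ < q := lt_of_not_ge hqm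
    rw [if_pos hmq, if_neg hqm, min_eq_left ((inv_lt_comm₀ hm hq).mp hmq).le]
    ring

def HasPropensity {Ω α κ : Type*} [MeasurableSpace Ω] (μ : Measure Ω) (A : Ω → κ)
    (X : Ω → α) (p₀ : κ → α → ℝ) : Prop :=
  ∀ a x, μ {ω | A ω = a ∧ X ω = x} = ENNReal.ofReal (p₀ a x) * μ {ω | X ω = x}

def Unconfounded {Ω α κ : Type*} [MeasurableSpace Ω] (μ : Measure Ω) (R : κ → Ω → ℝ)
    (A : Ω → κ) (X : Ω → α) : Prop :=
  ∀ a x (B : Set (κ → ℝ)), MeasurableSet B →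
    μ {ω | (fun b => R b ω) ∈ B ∧ A ω = a ∧ X ω = x} * μ {ω | X ω = x} =
      μ {ω | (fun b => R b ω) ∈ B ∧ X ω = x} * μ {ω | A ω = a ∧ X ω = x}

section Bandit

variable {Ω α κ : Type*} {X : Ω → α} {A : Ω → κ} {R : κ → Ω → ℝ}

lemma truncatedIps_eqOn_fiber [DecidableEq κ] {phat : κ → α → ℝ} {m : ℝ} (hm : 0 ≤ m)
    (a : κ) (x : α) :
    EqOn (fun ω => min ((if A ω = a then 1 else 0) / phat (A ω) (X ω)) m * R (A ω) ω)
      ((A ⁻¹' {a}).indicator fun ω => min (phat a x)⁻¹ m * R a ω) (X ⁻¹' {x}) := by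
  intro ω hω
  obtain rfl : X ω = x := hω
  by_cases hAa : A ω = a
  · simp [hAa]
  · simp [hAa, hm]

variable [MeasurableSpace Ω] {μ : Measure Ω}

lemma measure_reward_inter_action_fiber [IsFiniteMeasure μ] {p₀ : κ → α → ℝ}
    (hpolicy : HasPropensity μ A X p₀) (hunconf : Unconfounded μ R A X)
    (a : κ) (x : α) {B : Set (κ → ℝ)} (hB : MeasurableSet B) :
    μ ((fun ω b => R b ω) ⁻¹' B ∩ (A ⁻¹' {a} ∩ X ⁻¹' {x})) =
      ENNReal.ofReal (p₀ a x) * μ ((fun ω b => R b ω) ⁻¹' B ∩ X ⁻¹' {x}) := by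
  by_cases hnull : μ (X ⁻¹' {x}) = 0
  · rw [measure_mono_null (fun ω hω => hω.2.2) hnull,
      measure_mono_null inter_subset_right hnull, mul_zero]
  · rw [← ENNReal.mul_left_inj hnull (measure_ne_top μ _)]
    refine (hunconf a x B hB).trans ?_
    rw [hpolicy, mul_left_comm, ← mul_assoc]
    rfl

lemma setIntegral_action_fiber [IsFiniteMeasure μ] (hR : ∀ b, Measurable (R b))
    {p₀ : κ → α → ℝ} (hpolicy : HasPropensity μ A X p₀) (hunconf : Unconfounded μ R A X)
    {a : κ} {x : α} (hp : 0 ≤ p₀ a x) :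
    ∫ ω in A ⁻¹' {a} ∩ X ⁻¹' {x}, R a ω ∂μ = p₀ a x * ∫ ω in X ⁻¹' {x}, R a ω ∂μ :=
  setIntegral_comp_eq_mul_of_measure_inter (measurable_pi_lambda _ hR) hp
    (fun _ hB => measure_reward_inter_action_fiber hpolicy hunconf a x hB)
    (g := fun v => v a) (measurable_pi_apply a).stronglyMeasurable

variable [MeasurableSpace α] [MeasurableSingletonClass α]

variable [MeasurableSpace κ] [MeasurableSingletonClass κ] [DecidableEq κ]
  {phat : κ → α → ℝ} {m : ℝ}

lemma integrableOn_truncatedIps_fiber (hX : Measurable X) (hA : Measurable A) {a : κ}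
    (hRint : Integrable (R a) μ) (hm : 0 ≤ m) (x : α) :
    IntegrableOn (fun ω => min ((if A ω = a then 1 else 0) / phat (A ω) (X ω)) m * R (A ω) ω)
      (X ⁻¹' {x}) μ :=
  ((hRint.const_mul _).indicator (hA (measurableSet_singleton a))).integrableOn.congr_fun
    (truncatedIps_eqOn_fiber hm a x).symm (hX (measurableSet_singleton x))

lemma setIntegral_truncatedIps_fiber [IsFiniteMeasure μ] (hX : Measurable X)
    (hA : Measurable A) (hR : ∀ b, Measurable (R b)) {p₀ : κ → α → ℝ}
    (hpolicy : HasPropensity μ A X p₀) (hunconf : Unconfounded μ R A X)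
    (hm : 0 ≤ m) {a : κ} {x : α} (hp : 0 ≤ p₀ a x) :
    ∫ ω in X ⁻¹' {x}, min ((if A ω = a then 1 else 0) / phat (A ω) (X ω)) m * R (A ω) ω ∂μ =
      min (phat a x)⁻¹ m * p₀ a x * ∫ ω in X ⁻¹' {x}, R a ω ∂μ := by
  rw [setIntegral_congr_fun (hX (measurableSet_singleton x)) (truncatedIps_eqOn_fiber hm a x),
    setIntegral_indicator (hA (measurableSet_singleton a)), integral_const_mul, inter_comm,
    setIntegral_action_fiber hR hpolicy hunconf hp, mul_assoc]

lemma setIntegral_fiber_truncatedIps_bias [IsFiniteMeasure μ] (hX : Measurable X)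
    (hA : Measurable A) (hR : ∀ b, Measurable (R b)) {p₀ : κ → α → ℝ}
    (hpolicy : HasPropensity μ A X p₀) (hunconf : Unconfounded μ R A X)
    (hm : 0 < m) {a : κ} {x : α} (hp : 0 ≤ p₀ a x) (hphat : 0 < phat a x) :
    ∫ ω in X ⁻¹' {x}, condAvg μ {ω' | X ω' = X ω} (R a) ∂μ -
        ∫ ω in X ⁻¹' {x}, min ((if A ω = a then 1 else 0) / phat (A ω) (X ω)) m * R (A ω) ω ∂μ =
      ∫ ω in X ⁻¹' {x}, condAvg μ {ω' | X ω' = X ω} (R a) *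
        truncatedIpsBiasFactor m (phat a (X ω)) (p₀ a (X ω)) ∂μ := by
  rw [setIntegral_fiber_mul_comp hX _ (fun y => truncatedIpsBiasFactor m (phat a y) (p₀ a y)),
    setIntegral_fiber_condAvg hX,
    setIntegral_truncatedIps_fiber hX hA hR hpolicy hunconf hm.le hp,
    truncatedIpsBiasFactor_eq hm hphat]
  ring

end Bandit

theorem truncated_ips_conditional_bias_general
    {Ω : Type*} [MeasurableSpace Ω] (μ : Measure Ω) [IsProbabilityMeasure μ]
    (d k : ℕ) (𝒳i : Fin d → Type*)
    [∀ i, Fintype (𝒳i i)] [∀ i, MeasurableSpace (𝒳i i)]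
    [∀ i, MeasurableSingletonClass (𝒳i i)]
    (X : Ω → ∀ i, 𝒳i i) (A : Ω → Fin k) (R : Fin k → Ω → ℝ)
    (hX : Measurable X) (hA : Measurable A) (hR : ∀ a, Measurable (R a))
    (hRbdd : ∀ a ω, R a ω ∈ Set.Icc (0 : ℝ) 1)
    (p₀ : Fin k → (∀ i, 𝒳i i) → ℝ)
    -- common support
    (hp₀ : ∀ a x, 0 < p₀ a x)
    -- conditional on X, the action A is drawn from the logging policy p₀(⬝ | X)
    (hpolicy : ∀ a x,
      μ {ω | A ω = a ∧ X ω = x} = ENNReal.ofReal (p₀ a x) * μ {ω | X ω = x})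
    -- unconfoundedness: conditional on X, the potential rewards are independent of A
    (hunconf : ∀ (a : Fin k) (x : ∀ i, 𝒳i i) (Bset : Set (Fin k → ℝ)),
      MeasurableSet Bset →
      μ {ω | (fun b => R b ω) ∈ Bset ∧ A ω = a ∧ X ω = x} * μ {ω | X ω = x} =
        μ {ω | (fun b => R b ω) ∈ Bset ∧ X ω = x} * μ {ω | A ω = a ∧ X ω = x})
    -- estimated propensities and truncation level
    (phat₀ : Fin k → (∀ i, 𝒳i i) → ℝ) (hphat₀ : ∀ a x, 0 < phat₀ a x)
    (m : ℝ) (hm : 0 < m)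
    (a : Fin k) (i : Fin d) (xi : 𝒳i i) :
    condAvg μ {ω | X ω i = xi} (fun ω => condAvg μ {ω' | X ω' = X ω} (R a)) -
        condAvg μ {ω | X ω i = xi}
          (fun ω => min ((if A ω = a then (1 : ℝ) else 0) / phat₀ (A ω) (X ω)) m
            * R (A ω) ω) =
      condAvg μ {ω | X ω i = xi}
        (fun ω => condAvg μ {ω' | X ω' = X ω} (R a) *
          ((1 - p₀ a (X ω) / phat₀ a (X ω)) * (if m⁻¹ < phat₀ a (X ω) then (1 : ℝ) else 0)
            + (1 - m * p₀ a (X ω)) * (if phat₀ a (X ω) ≤ m⁻¹ then (1 : ℝ) else 0))) := by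
  classical
  have hRint : Integrable (R a) μ := Integrable.of_bound (hR a).aestronglyMeasurable 1
    (ae_of_all _ fun ω => abs_le.mpr ⟨by linarith [(hRbdd a ω).1], (hRbdd a ω).2⟩)
  have hE : {ω | X ω i = xi} =
      X ⁻¹' (Finset.univ.filter fun x : (∀ j, 𝒳i j) => x i = xi) := by
    ext; simp
  show _ = condAvg μ _ fun ω => condAvg μ {ω' | X ω' = X ω} (R a) *
    truncatedIpsBiasFactor m (phat₀ a (X ω)) (p₀ a (X ω))
  refine condAvg_sub_condAvg_of_setIntegral ?_
  rw [hE, setIntegral_preimage_finset_eq_sum hX _ fun x _ =>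
      integrableOn_fiber_comp hX (fun y => condAvg μ {ω' | X ω' = y} (R a)) x,
    setIntegral_preimage_finset_eq_sum hX _ fun x _ =>
      integrableOn_truncatedIps_fiber hX hA hRint hm.le x,
    setIntegral_preimage_finset_eq_sum hX _ fun x _ => integrableOn_fiber_comp hX
      (fun y => condAvg μ {ω' | X ω' = y} (R a) *
        truncatedIpsBiasFactor m (phat₀ a y) (p₀ a y)) x,
    ← Finset.sum_sub_distrib]
  exact Finset.sum_congr rfl fun x _ => setIntegral_fiber_truncatedIps_bias hX hA hR hpolicy
    hunconf hm (hp₀ a x).le (hphat₀ a x)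

/-- conditional version of Lemma 3 of the paper: for any estimated
propensity function `p̂₀ > 0`, truncation level `m > 0`, feature type `i` and value
`x_i` with `Pr(X_i = x_i) > 0`, under common support and unconfoundedness,
`r̄(a, x_i) - E[min(𝕀(A = a)/p̂₀(A|X), m) R^obs | X_i = x_i]
  = E[ r̄(a,X) ( (1 - p₀(a|X)/p̂₀(a|X)) 𝕀(p̂₀(a|X) > m⁻¹)
              + (1 - m p₀(a|X)) 𝕀(p̂₀(a|X) ≤ m⁻¹) ) | X_i = x_i ]`. -/
theorem truncated_ips_conditional_bias
    {Ω : Type*} [MeasurableSpace Ω] (μ : Measure Ω) [IsProbabilityMeasure μ]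
    (d k : ℕ) (𝒳i : Fin d → Type*)
    [∀ i, Fintype (𝒳i i)] [∀ i, MeasurableSpace (𝒳i i)]
    [∀ i, MeasurableSingletonClass (𝒳i i)]
    (X : Ω → ∀ i, 𝒳i i) (A : Ω → Fin k) (R : Fin k → Ω → ℝ)
    (hX : Measurable X) (hA : Measurable A) (hR : ∀ a, Measurable (R a))
    (hRbdd : ∀ a ω, R a ω ∈ Set.Icc (0 : ℝ) 1)
    (p₀ : Fin k → (∀ i, 𝒳i i) → ℝ)
    -- common support
    (hp₀ : ∀ a x, 0 < p₀ a x)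
    -- conditional on X, the action A is drawn from the logging policy p₀(⬝ | X)
    (hpolicy : ∀ a x,
      μ {ω | A ω = a ∧ X ω = x} = ENNReal.ofReal (p₀ a x) * μ {ω | X ω = x})
    -- unconfoundedness: conditional on X, the potential rewards are independent of A
    (hunconf : ∀ (a : Fin k) (x : ∀ i, 𝒳i i) (Bset : Set (Fin k → ℝ)),
      MeasurableSet Bset →
      μ {ω | (fun b => R b ω) ∈ Bset ∧ A ω = a ∧ X ω = x} * μ {ω | X ω = x} =
        μ {ω | (fun b => R b ω) ∈ Bset ∧ X ω = x} * μ {ω | A ω = a ∧ X ω = x})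
    -- estimated propensities and truncation level
    (phat₀ : Fin k → (∀ i, 𝒳i i) → ℝ) (hphat₀ : ∀ a x, 0 < phat₀ a x)
    (m : ℝ) (hm : 0 < m)
    (a : Fin k) (i : Fin d) (xi : 𝒳i i)
    (hxi : 0 < μ {ω | X ω i = xi}) :
    condAvg μ {ω | X ω i = xi} (fun ω => condAvg μ {ω' | X ω' = X ω} (R a)) -
        condAvg μ {ω | X ω i = xi}
          (fun ω => min ((if A ω = a then (1 : ℝ) else 0) / phat₀ (A ω) (X ω)) m
            * R (A ω) ω) =
      condAvg μ {ω | X ω i = xi}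
        (fun ω => condAvg μ {ω' | X ω' = X ω} (R a) *
          ((1 - p₀ a (X ω) / phat₀ a (X ω)) * (if m⁻¹ < phat₀ a (X ω) then (1 : ℝ) else 0)
            + (1 - m * p₀ a (X ω)) * (if phat₀ a (X ω) ≤ m⁻¹ then (1 : ℝ) else 0))) :=
  truncated_ips_conditional_bias_general μ d k 𝒳i X A R hX hA hR hRbdd p₀ hp₀ hpolicy hunconf phat₀
    hphat₀ m hm a i xi
end

section
/- Let f : [0,1] → ℝ be L-Lipschitz, let s ≥ 1 be an integer, and partition [0,1] into s consecutive intervals (bins) each of length 1/s. Let X be a [0,1]-valued random variable, let C(X) denote the bin containing X, and for a bin c with Pr(X ∈ c) > 0 write f̄(c) = E[f(X) | X ∈ c]. Let ℓ : ℝ → ℝ be nondecreasing and B-Lipschitz, and let c₀ ∈ ℝ. Then E[ℓ(f(X) − c₀)] ≤ L B / s + E[ℓ(f̄(C(X)) − c₀)]. -/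
/-!
Two points in the same bin are within `1/s` of each other, so `f(X)` differs from every value of
`f` on its bin by at most `L/s`, and hence `f(X) ≤ f̄(C(X)) + L/s` whenever the bin of `X` has
positive probability, which holds almost surely. Monotonicity and the Lipschitz bound on `ℓ` turn
this into `ℓ(f(X) - c₀) ≤ ℓ(f̄(C(X)) - c₀) + L B / s` almost surely; integrate.
-/

open MeasureTheory ProbabilityTheory

/-- The index (in `{0, …, s-1}`) of the bin of length `1/s` containing `t ∈ [0,1]`. -/
noncomputable def binIdx (s : ℕ) (t : ℝ) : ℕ := min ⌊t * s⌋₊ (s - 1)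

section Bins

variable {s : ℕ} {t t' : ℝ}

lemma binIdx_lt (hs : 1 ≤ s) (t : ℝ) : binIdx s t < s :=
  (min_le_right _ _).trans_lt (by omega)

lemma measurable_binIdx (s : ℕ) : Measurable (binIdx s) :=
  (Nat.measurable_floor.comp (measurable_id.mul_const _)).min measurable_const

lemma binIdx_le_mul (ht : 0 ≤ t) : (binIdx s t : ℝ) ≤ t * s :=
  (Nat.cast_le.2 (min_le_left _ _)).trans (Nat.floor_le (by positivity))

lemma mul_le_binIdx_add_one (hs : 1 ≤ s) (ht : t ≤ 1) : t * s ≤ binIdx s t + 1 := by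
  rw [binIdx, Nat.cast_min, ← min_add_add_right, le_min_iff, Nat.cast_sub hs, Nat.cast_one,
    sub_add_cancel]
  exact ⟨(Nat.lt_floor_add_one _).le, mul_le_of_le_one_left s.cast_nonneg ht⟩

lemma abs_sub_le_of_binIdx_eq (hs : 1 ≤ s) (ht : t ∈ Set.Icc (0 : ℝ) 1)
    (ht' : t' ∈ Set.Icc (0 : ℝ) 1) (h : binIdx s t = binIdx s t') : |t - t'| ≤ 1 / s := by
  have hs' : (0 : ℝ) < s := by exact_mod_cast hs
  rw [abs_sub_le_iff, le_div_iff₀ hs', le_div_iff₀ hs', sub_mul, sub_mul]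
  have hlo := binIdx_le_mul (s := s) ht.1
  have hhi := mul_le_binIdx_add_one hs ht.2
  rw [h] at hlo hhi
  exact ⟨by linarith [binIdx_le_mul (s := s) ht'.1],
    by linarith [mul_le_binIdx_add_one hs ht'.2]⟩

end Bins

section Integrability

variable {α E : Type*} [MeasurableSpace α] {μ : Measure α}
  [TopologicalSpace E] [MeasurableSpace E] [OpensMeasurableSpace E]
  {g : E → ℝ} {K : Set E} {u : α → E}

lemma ContinuousOn.measurable_comp_of_forall_mem (hg : ContinuousOn g K) (hu : Measurable u)
    (huK : ∀ a, u a ∈ K) : Measurable fun a => g (u a) :=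
  hg.domRestrict.measurable.comp (hu.subtype_mk (h := huK))

lemma ContinuousOn.integrable_comp_of_forall_mem [IsFiniteMeasure μ] (hg : ContinuousOn g K)
    (hK : IsCompact K) (hu : Measurable u) (huK : ∀ a, u a ∈ K) :
    Integrable (fun a => g (u a)) μ := by
  obtain ⟨C, hC⟩ := hK.exists_bound_of_continuousOn hg
  exact .of_bound (hg.measurable_comp_of_forall_mem hu huK).aestronglyMeasurable C
    (.of_forall fun a => hC _ (huK a))

end Integrability

lemma ae_measure_fiber_ne_zero {α β : Type*} [MeasurableSpace α] [Countable β] {μ : Measure α}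
    (j : α → β) : ∀ᵐ a ∂μ, μ {a' | j a' = j a} ≠ 0 := by
  have hnull : μ (⋃ b ∈ {b | μ (j ⁻¹' {b}) = 0}, j ⁻¹' {b}) = 0 :=
    (measure_biUnion_null_iff (Set.to_countable _)).2 fun b hb => hb
  refine measure_mono_null (fun a ha => ?_) hnull
  exact Set.mem_biUnion (x := j a) (not_not.1 ha) rfl

lemma le_condAvg_of_forall_le {α : Type*} [MeasurableSpace α] {μ : Measure α} {E : Set α}
    {g : α → ℝ} {c : ℝ} (hE : MeasurableSet E) (hμ0 : μ E ≠ 0) (hμ : μ E ≠ ⊤)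
    (hg : IntegrableOn g E μ) (hc : ∀ a ∈ E, c ≤ g a) : c ≤ condAvg μ E g :=
  (le_div_iff₀ (ENNReal.toReal_pos hμ0 hμ)).2 (setIntegral_ge_of_const_le_real hE hμ hc hg)

lemma Monotone.le_add_mul_of_le_add {ℓ : ℝ → ℝ} {B x y δ : ℝ} (hmono : Monotone ℓ)
    (hlip : ∀ r r', |ℓ r - ℓ r'| ≤ B * |r - r'|) (hδ : 0 ≤ δ) (h : x ≤ y + δ) :
    ℓ x ≤ ℓ y + B * δ := by
  have hstep := (le_abs_self _).trans (hlip (y + δ) y)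
  rw [add_sub_cancel_left, abs_of_nonneg hδ] at hstep
  linarith [hmono h]

theorem binning_step_general
    {Ω : Type*} [MeasurableSpace Ω] (μ : Measure Ω) [IsProbabilityMeasure μ]
    (f : ℝ → ℝ) (L : ℝ)
    (hf : ∀ x ∈ Set.Icc (0 : ℝ) 1, ∀ y ∈ Set.Icc (0 : ℝ) 1, |f x - f y| ≤ L * |x - y|)
    (s : ℕ) (hs : 1 ≤ s)
    (X : Ω → ℝ) (hXmeas : Measurable X) (hX : ∀ ω, X ω ∈ Set.Icc (0 : ℝ) 1)
    (ℓ : ℝ → ℝ) (hmono : Monotone ℓ)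
    (B : ℝ) (hlip : ∀ r r', |ℓ r - ℓ r'| ≤ B * |r - r'|)
    (c₀ : ℝ) :
    (∫ ω, ℓ (f (X ω) - c₀) ∂μ) ≤
      L * B / s +
        ∫ ω, ℓ (condAvg μ {ω' | binIdx s (X ω') = binIdx s (X ω)}
          (fun ω' => f (X ω')) - c₀) ∂μ := by
  have hL : 0 ≤ L := (abs_nonneg _).trans (by simpa using hf 0 (by simp) 1 (by simp))
  have hfc : ContinuousOn f (Set.Icc 0 1) := (LipschitzOnWith.of_dist_le' hf).continuousOn
  have hℓc : Continuous ℓ := (LipschitzWith.of_dist_le' hlip).continuous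
  set j : Ω → ℕ := fun ω => binIdx s (X ω)
  have hj : Measurable j := (measurable_binIdx s).comp hXmeas
  set F : ℕ → ℝ := fun k => condAvg μ {ω' | j ω' = k} (fun ω' => f (X ω'))
  have hfX : Integrable (fun ω => f (X ω)) μ :=
    hfc.integrable_comp_of_forall_mem isCompact_Icc hXmeas hX
  have hbin : ∀ᵐ ω ∂μ, f (X ω) - L / s ≤ F (j ω) := by
    filter_upwards [ae_measure_fiber_ne_zero j] with ω hω
    refine le_condAvg_of_forall_le (hj (measurableSet_singleton _)) hω (measure_ne_top _ _)
      hfX.integrableOn fun ω' hω' => ?_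
    have hclose : L * |X ω - X ω'| ≤ L * (1 / s) :=
      mul_le_mul_of_nonneg_left (abs_sub_le_of_binIdx_eq hs (hX ω) (hX ω') hω'.symm) hL
    linarith [le_abs_self (f (X ω) - f (X ω')), hf _ (hX ω) _ (hX ω'), mul_one_div L s]
  have hloss : ∀ᵐ ω ∂μ, ℓ (f (X ω) - c₀) ≤ L * B / s + ℓ (F (j ω) - c₀) := by
    filter_upwards [hbin] with ω hω
    calc ℓ (f (X ω) - c₀) ≤ ℓ (F (j ω) - c₀) + B * (L / s) :=
          hmono.le_add_mul_of_le_add hlip (by positivity) (by linarith)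
      _ = L * B / s + ℓ (F (j ω) - c₀) := by ring
  have hF : Integrable (fun ω => ℓ (F (j ω) - c₀)) μ :=
    (continuous_of_discreteTopology (f := fun k => ℓ (F k - c₀))).continuousOn
      |>.integrable_comp_of_forall_mem (Set.finite_Iio s).isCompact hj
        fun ω => binIdx_lt hs (X ω)
  have hℓfX : Integrable (fun ω => ℓ (f (X ω) - c₀)) μ :=
    (hℓc.comp_continuousOn (hfc.sub continuousOn_const)).integrable_comp_of_forall_mem
      isCompact_Icc hXmeas hX
  calc ∫ ω, ℓ (f (X ω) - c₀) ∂μ ≤ ∫ ω, (L * B / s + ℓ (F (j ω) - c₀)) ∂μ :=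
        integral_mono_ae hℓfX ((integrable_const _).add hF) hloss
    _ = L * B / s + ∫ ω, ℓ (F (j ω) - c₀) ∂μ := by
        rw [integral_add (integrable_const _) hF, integral_const, probReal_univ, one_smul]

/-- the binning step in the proof of Theorem 2 of the paper:
if `f : [0,1] → ℝ` is `L`-Lipschitz, `[0,1]` is partitioned into `s` bins of length
`1/s`, `X` is a `[0,1]`-valued random variable, `f̄(c) = E[f(X) | X ∈ c]`, and
`ℓ` is nondecreasing and `B`-Lipschitz, then for every `c₀`,
`E[ℓ(f(X) - c₀)] ≤ L B / s + E[ℓ(f̄(C(X)) - c₀)]`,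
where `C(X)` is the bin containing `X`. -/
theorem binning_step
    {Ω : Type*} [MeasurableSpace Ω] (μ : Measure Ω) [IsProbabilityMeasure μ]
    (f : ℝ → ℝ) (L : ℝ) (hL : 0 ≤ L)
    (hf : ∀ x ∈ Set.Icc (0 : ℝ) 1, ∀ y ∈ Set.Icc (0 : ℝ) 1, |f x - f y| ≤ L * |x - y|)
    (s : ℕ) (hs : 1 ≤ s)
    (X : Ω → ℝ) (hXmeas : Measurable X) (hX : ∀ ω, X ω ∈ Set.Icc (0 : ℝ) 1)
    (ℓ : ℝ → ℝ) (hmono : Monotone ℓ)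
    (B : ℝ) (hlip : ∀ r r', |ℓ r - ℓ r'| ≤ B * |r - r'|)
    (c₀ : ℝ) :
    (∫ ω, ℓ (f (X ω) - c₀) ∂μ) ≤
      L * B / s +
        ∫ ω, ℓ (condAvg μ {ω' | binIdx s (X ω') = binIdx s (X ω)}
          (fun ω' => f (X ω')) - c₀) ∂μ :=
  binning_step_general μ f L hf s hs X hXmeas hX ℓ hmono B hlip c₀
end
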